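/- Let k₁, k₂, l₁, l₂ ∈ ℤ and define φ : ℝ² → ℝ⁴ by φ(u,v) = (1/√2)(cos(k₁u+k₂v), sin(k₁u+k₂v), cos(l₁u+l₂v), sin(l₁u+l₂v)). Set a = k₁²+k₂², b = l₁²+l₂² and e = ½(a+b). Then for all (u,v) ∈ ℝ²: (i) |φ(u,v)| = 1; (ii) |Δφ(u,v)|² = ½(a²+b²); and (iii) Δ(Δφ)(u,v) + 2e·Δφ(u,v) + (2e² − ½(a²+b²))·φ(u,v) = 0. -/

import Mathlib

/-!
STATEMENT 1: For φ : ℝ² → ℝ⁴,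
φ(u,v) = (1/√2)(cos(k₁u+k₂v), sin(k₁u+k₂v), cos(l₁u+l₂v), sin(l₁u+l₂v)),
with a = k₁²+k₂², b = l₁²+l₂², e = ½(a+b), one has for all (u,v):
(i) |φ(u,v)| = 1; (ii) |Δφ(u,v)|² = ½(a²+b²);
(iii) Δ(Δφ) + 2e·Δφ + (2e² − ½(a²+b²))·φ = 0.
Here Δ is the componentwise Euclidean Laplacian ∂²/∂u² + ∂²/∂v².
-/

/-- The componentwise Euclidean Laplacian of a map `ℝ² → ℝ⁴`,
`Δf = ∂²f/∂u² + ∂²f/∂v²`. -/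
noncomputable def lap2 (f : ℝ → ℝ → Fin 4 → ℝ) (u v : ℝ) : Fin 4 → ℝ :=
  fun i => iteratedDeriv 2 (fun u' => f u' v i) u + iteratedDeriv 2 (fun v' => f u v' i) v

/-- The map `φ(u,v) = (1/√2)(cos(k₁u+k₂v), sin(k₁u+k₂v), cos(l₁u+l₂v), sin(l₁u+l₂v))`. -/
noncomputable def phiT (k₁ k₂ l₁ l₂ : ℤ) (u v : ℝ) : Fin 4 → ℝ :=
  fun i => (1 / Real.sqrt 2) *
    ![Real.cos ((k₁ : ℝ) * u + (k₂ : ℝ) * v), Real.sin ((k₁ : ℝ) * u + (k₂ : ℝ) * v),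
      Real.cos ((l₁ : ℝ) * u + (l₂ : ℝ) * v), Real.sin ((l₁ : ℝ) * u + (l₂ : ℝ) * v)] i

/-!
Each component of `φ` is a plane wave `c · g(m u + n v)` with `g ∈ {cos, sin}`, hence an
eigenfunction of `Δ` with eigenvalue `-λ`, where `λ = m² + n²` is `a` on the first two components
and `b` on the last two. Thus `Δφᵢ = -λᵢ φᵢ`, `Δ²φᵢ = λᵢ² φᵢ`, and (iii) reduces to
`λ² - 2eλ + 2e² - (a² + b²)/2 = (λ - a)(λ - b) = 0`; (i) and (ii) follow from `cos² + sin² = 1`.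
-/

open Real

lemma iteratedDeriv_two_cos : iteratedDeriv 2 cos = -cos := by
  simp

lemma iteratedDeriv_two_sin : iteratedDeriv 2 sin = -sin := by
  simpa using iteratedDeriv_even_sin 1

lemma iteratedDeriv_two_comp_mul_add {g : ℝ → ℝ} (hg : ContDiff ℝ 2 g)
    (hg₂ : iteratedDeriv 2 g = -g) (m d : ℝ) :
    iteratedDeriv 2 (fun x => g (m * x + d)) = fun x => -m ^ 2 * g (m * x + d) := by
  have hshift : ContDiff ℝ 2 (fun y => g (y + d)) := hg.comp (contDiff_id.add contDiff_const)
  rw [iteratedDeriv_comp_const_mul hshift m, iteratedDeriv_comp_add_const, hg₂]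
  funext x
  simp only [Pi.neg_apply]
  ring

lemma lap2_apply_of_eq_const_mul {f g : ℝ → ℝ → Fin 4 → ℝ} {i : Fin 4} {c : ℝ}
    (h : ∀ u v, f u v i = c * g u v i) (u v : ℝ) :
    lap2 f u v i = c * lap2 g u v i := by
  simp only [lap2, h, iteratedDeriv_const_mul_field]
  ring

lemma lap2_apply_of_eq_planeWave {f : ℝ → ℝ → Fin 4 → ℝ} {i : Fin 4} {g : ℝ → ℝ}
    (hg : ContDiff ℝ 2 g) (hg₂ : iteratedDeriv 2 g = -g) {c m n : ℝ}
    (hf : ∀ u v, f u v i = c * g (m * u + n * v)) (u v : ℝ) :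
    lap2 f u v i = -(m ^ 2 + n ^ 2) * f u v i := by
  have hu : (fun u' => f u' v i) = fun u' => c * g (m * u' + n * v) := funext fun u' => hf u' v
  have hv : (fun v' => f u v' i) = fun v' => c * g (n * v' + m * u) := by
    funext v'
    rw [hf, add_comm]
  change iteratedDeriv 2 (fun u' => f u' v i) u + iteratedDeriv 2 (fun v' => f u v' i) v = _
  rw [hu, hv, iteratedDeriv_const_mul_field, iteratedDeriv_const_mul_field,
    iteratedDeriv_two_comp_mul_add hg hg₂, iteratedDeriv_two_comp_mul_add hg hg₂, hf]
  dsimp only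
  rw [add_comm (n * v)]
  ring

lemma sq_mul_cos_add_sq_mul_sin (c x : ℝ) : (c * cos x) ^ 2 + (c * sin x) ^ 2 = c ^ 2 := by
  linear_combination c ^ 2 * sin_sq_add_cos_sq x

lemma one_div_sqrt_two_sq : (1 / √2) ^ 2 = (1 / 2 : ℝ) := by
  rw [div_pow, sq_sqrt zero_le_two, one_pow]

section phiT

variable (k₁ k₂ l₁ l₂ : ℤ)

def phiTEigenvalue : Fin 4 → ℝ :=
  ![(k₁ : ℝ) ^ 2 + (k₂ : ℝ) ^ 2, (k₁ : ℝ) ^ 2 + (k₂ : ℝ) ^ 2,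
    (l₁ : ℝ) ^ 2 + (l₂ : ℝ) ^ 2, (l₁ : ℝ) ^ 2 + (l₂ : ℝ) ^ 2]

lemma lap2_phiT_apply (u v : ℝ) (i : Fin 4) :
    lap2 (phiT k₁ k₂ l₁ l₂) u v i = -phiTEigenvalue k₁ k₂ l₁ l₂ i * phiT k₁ k₂ l₁ l₂ u v i := by
  fin_cases i
  · exact lap2_apply_of_eq_planeWave contDiff_cos iteratedDeriv_two_cos (fun _ _ => rfl) u v
  · exact lap2_apply_of_eq_planeWave contDiff_sin iteratedDeriv_two_sin (fun _ _ => rfl) u v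
  · exact lap2_apply_of_eq_planeWave contDiff_cos iteratedDeriv_two_cos (fun _ _ => rfl) u v
  · exact lap2_apply_of_eq_planeWave contDiff_sin iteratedDeriv_two_sin (fun _ _ => rfl) u v

lemma lap2_lap2_phiT_apply (u v : ℝ) (i : Fin 4) :
    lap2 (fun u' v' => lap2 (phiT k₁ k₂ l₁ l₂) u' v') u v i =
      phiTEigenvalue k₁ k₂ l₁ l₂ i ^ 2 * phiT k₁ k₂ l₁ l₂ u v i := by
  rw [lap2_apply_of_eq_const_mul (fun u' v' => lap2_phiT_apply k₁ k₂ l₁ l₂ u' v' i),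
    lap2_phiT_apply]
  ring

lemma phiT_sq_add_sq_01 (u v : ℝ) :
    phiT k₁ k₂ l₁ l₂ u v 0 ^ 2 + phiT k₁ k₂ l₁ l₂ u v 1 ^ 2 = 1 / 2 :=
  (sq_mul_cos_add_sq_mul_sin _ _).trans one_div_sqrt_two_sq

lemma phiT_sq_add_sq_23 (u v : ℝ) :
    phiT k₁ k₂ l₁ l₂ u v 2 ^ 2 + phiT k₁ k₂ l₁ l₂ u v 3 ^ 2 = 1 / 2 :=
  (sq_mul_cos_add_sq_mul_sin _ _).trans one_div_sqrt_two_sq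

end phiT

theorem stmt1 (k₁ k₂ l₁ l₂ : ℤ) (a b e : ℝ)
    (ha : a = (k₁ : ℝ) ^ 2 + (k₂ : ℝ) ^ 2) (hb : b = (l₁ : ℝ) ^ 2 + (l₂ : ℝ) ^ 2)
    (he : e = (a + b) / 2) :
    (∀ u v : ℝ, ∑ i : Fin 4, (phiT k₁ k₂ l₁ l₂ u v i) ^ 2 = 1) ∧
    (∀ u v : ℝ, ∑ i : Fin 4, (lap2 (phiT k₁ k₂ l₁ l₂) u v i) ^ 2 = (a ^ 2 + b ^ 2) / 2) ∧
    (∀ u v : ℝ, ∀ i : Fin 4,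
        lap2 (fun u' v' => lap2 (phiT k₁ k₂ l₁ l₂) u' v') u v i
          + 2 * e * lap2 (phiT k₁ k₂ l₁ l₂) u v i
          + (2 * e ^ 2 - (a ^ 2 + b ^ 2) / 2) * phiT k₁ k₂ l₁ l₂ u v i = 0) := by
  refine ⟨fun u v => ?_, fun u v => ?_, fun u v i => ?_⟩
  · rw [Fin.sum_univ_four]
    linear_combination phiT_sq_add_sq_01 k₁ k₂ l₁ l₂ u v + phiT_sq_add_sq_23 k₁ k₂ l₁ l₂ u v
  · simp only [Fin.sum_univ_four, lap2_phiT_apply, phiTEigenvalue, ← ha, ← hb,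
      Matrix.cons_val_zero, Matrix.cons_val_one, Matrix.cons_val_two, Matrix.cons_val_three,
      Matrix.head_cons, Matrix.tail_cons]
    linear_combination a ^ 2 * phiT_sq_add_sq_01 k₁ k₂ l₁ l₂ u v +
      b ^ 2 * phiT_sq_add_sq_23 k₁ k₂ l₁ l₂ u v
  · have hroot : (phiTEigenvalue k₁ k₂ l₁ l₂ i - a) * (phiTEigenvalue k₁ k₂ l₁ l₂ i - b) = 0 := by
      fin_cases i <;> simp [phiTEigenvalue, ha, hb]
    rw [lap2_lap2_phiT_apply, lap2_phiT_apply, he]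
    linear_combination phiT k₁ k₂ l₁ l₂ u v i * hroot
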